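/- Fix n ≥ 2 and R ≥ 13. Let y be a Perron number whose minimal polynomial over ℚ has degree n, with R/2 ≤ y ≤ R, and such that every Galois conjugate μ ≠ y of y satisfies |μ| < R/3. Then the number of such y is, for all sufficiently large R, at least c · R^{n(n+1)/2} for some constant c > 0 depending only on n. -/

import Mathlib

/-!
For `n = k + 1`, take the monic integer polynomials `X^n + c_k X^k + ⋯ + c_0` whose top lower
coefficient `c_k` is even with `-c_k ∈ [7R/10, 4R/5]`, and whose other coefficients are
`≡ 2 mod 4` with `|c_i| ≤ ε R^(n-i)` for a small constant `ε = ε(n)`. They are Eisenstein at `2`,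
hence irreducible. On `[3R/5, 9R/10]` the polynomial is dominated by `x^k (x + c_k)`, so it has a
real root `y` within `R/10` of `-c_k`. Dividing out `X - y` leaves a monic polynomial whose
`j`-th coefficient is `O(ε R^(k-j))` (only `c_0, …, c_j` enter it), so all its roots have
modulus `< R/3`. Distinct polynomials have distinct roots `y`, being their minimal polynomials,
and there are `≫ R · ∏_{i<k} R^(n-i) = R^(n(n+1)/2)` of them; the set counted is finite because
bounding all conjugates bounds the coefficients of the minimal polynomial.
-/

open Polynomial

/-- A Perron number: a real algebraic integer `λ > 1` all of whose Galois conjugates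
`μ ≠ λ` satisfy `|μ| < λ`. -/
def IsPerronNumber (l : ℝ) : Prop :=
  1 < l ∧ IsIntegral ℤ l ∧
    ∀ μ ∈ (minpoly ℚ l).aroots ℂ, μ ≠ (l : ℂ) → ‖μ‖ < l

open Finset

namespace Polynomial

theorem sum_range_coeff_mul_X_sub_C_mul_pow {R : Type*} [CommRing R] (g : R[X]) (a : R)
    (j : ℕ) :
    ∑ i ∈ range (j + 1), (g * (X - C a)).coeff i * a ^ i = -(g.coeff j * a ^ (j + 1)) := by
  induction j with
  | zero => simp [mul_sub]
  | succ j ih => rw [sum_range_succ, ih, coeff_mul_X_sub_C]; ring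

/-- A weighted Cauchy bound, for coefficients of size `A ^ (natDegree - j)`, where
`Polynomial.cauchyBound` is too crude. -/
theorem norm_lt_of_isRoot_of_norm_coeff_le {K : Type*} [NormedField K] {p : K[X]}
    (hp : p.Monic) {A δ : ℝ} (hA : 0 < A) (hδ : 0 ≤ δ)
    (hcoeff : ∀ j < p.natDegree, ‖p.coeff j‖ ≤ δ * A ^ (p.natDegree - j))
    (hkδ : p.natDegree * δ < 1) {μ : K} (hμ : p.IsRoot μ) : ‖μ‖ < A := by
  set k := p.natDegree
  by_contra! hμA
  have hμk : μ ^ k = -∑ j ∈ range k, p.coeff j * μ ^ j := by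
    have h := hμ.eq_zero
    rw [eval_eq_sum_range, sum_range_succ, hp.coeff_natDegree, one_mul] at h
    linear_combination h
  have hterm : ∀ j ∈ range k, ‖p.coeff j * μ ^ j‖ ≤ δ * ‖μ‖ ^ k := by
    intro j hj
    have hjk : j ≤ k := (mem_range.mp hj).le
    calc ‖p.coeff j * μ ^ j‖ ≤ δ * A ^ (k - j) * ‖μ‖ ^ j := by
          rw [norm_mul, norm_pow]; gcongr; exact hcoeff j (mem_range.mp hj)
      _ ≤ δ * ‖μ‖ ^ (k - j) * ‖μ‖ ^ j := by gcongr
      _ = δ * ‖μ‖ ^ k := by rw [mul_assoc, ← pow_add, Nat.sub_add_cancel hjk]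
  have hle : ‖μ‖ ^ k ≤ k * δ * ‖μ‖ ^ k := calc
    ‖μ‖ ^ k = ‖∑ j ∈ range k, p.coeff j * μ ^ j‖ := by rw [← norm_pow, hμk, norm_neg]
    _ ≤ ∑ j ∈ range k, δ * ‖μ‖ ^ k := (norm_sum_le _ _).trans (sum_le_sum hterm)
    _ = k * δ * ‖μ‖ ^ k := by rw [sum_const, card_range, nsmul_eq_mul, mul_assoc]
  have hpos : 0 < ‖μ‖ ^ k := pow_pos (hA.trans_le hμA) k
  nlinarith

theorem Monic.irreducible_of_prime_dvd_coeff {R : Type*} [CommRing R] [IsDomain R] {p : R[X]}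
    (hp : p.Monic) (hdeg : 0 < p.natDegree) {q : R} (hq : Prime q)
    (hdvd : ∀ i < p.natDegree, q ∣ p.coeff i) (h0 : ¬ q ^ 2 ∣ p.coeff 0) : Irreducible p := by
  have hprime : (Ideal.span {q}).IsPrime := (Ideal.span_singleton_prime hq.ne_zero).mpr hq
  refine IsEisensteinAt.irreducible ?_ hprime hp.isPrimitive hdeg
  refine hp.isEisensteinAt_of_mem_of_notMem hprime.ne_top (fun hi => ?_) ?_
  · exact Ideal.mem_span_singleton.mpr (hdvd _ hi)
  · rwa [Ideal.span_singleton_pow, Ideal.mem_span_singleton]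

end Polynomial

theorem minpoly_eq_map_of_irreducible {K : Type*} [Field K] [CharZero K] {p : ℤ[X]}
    (hp : p.Monic) (hirr : Irreducible p) {y : K} (hy : aeval y p = 0) :
    minpoly ℚ y = p.map (algebraMap ℤ ℚ) :=
  (minpoly.eq_of_irreducible_of_monic (hp.irreducible_iff_irreducible_map_fraction_map.mp hirr)
    (by rwa [aeval_map_algebraMap]) (hp.map _)).symm

theorem Fin.sum_univ_sub_val_eq (n : ℕ) : ∑ i : Fin n, (n - (i : ℕ)) = n * (n + 1) / 2 := by
  have gauss := sum_range_id (n + 1)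
  rw [Nat.add_sub_cancel, sum_range_succ', add_zero, mul_comm] at gauss
  rw [Fin.sum_univ_eq_sum_range (fun i => n - i), ← sum_range_reflect, ← gauss]
  refine sum_congr rfl fun j hj => ?_
  have := mem_range.mp hj
  omega

section SmallLowerCoefficients

variable {K : Type*} [NormedField K] {p : K[X]} {k : ℕ} {R ε : ℝ}

theorem norm_sum_range_coeff_mul_pow_le (hcoeff : ∀ i < k, ‖p.coeff i‖ ≤ ε * R ^ (k + 1 - i))
    {x : K} (hx : ‖x‖ ≤ R) {j : ℕ} (hj : j ≤ k) :
    ‖∑ i ∈ range j, p.coeff i * x ^ i‖ ≤ j * (ε * R ^ (k + 1)) := by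
  have hterm : ∀ i ∈ range j, ‖p.coeff i * x ^ i‖ ≤ ε * R ^ (k + 1) := by
    intro i hi
    have hik : i < k := (mem_range.mp hi).trans_le hj
    calc ‖p.coeff i * x ^ i‖ ≤ ε * R ^ (k + 1 - i) * R ^ i := by
          rw [norm_mul, norm_pow]
          exact mul_le_mul (hcoeff i hik) (pow_le_pow_left₀ (norm_nonneg x) hx i)
            (by positivity) ((norm_nonneg _).trans (hcoeff i hik))
      _ = ε * R ^ (k + 1) := by rw [mul_assoc, ← pow_add, Nat.sub_add_cancel (by omega)]
  calc _ ≤ ∑ _i ∈ range j, ε * R ^ (k + 1) := (norm_sum_le _ _).trans (sum_le_sum hterm)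
    _ = j * (ε * R ^ (k + 1)) := by rw [sum_const, card_range, nsmul_eq_mul]

theorem norm_coeff_divByMonic_X_sub_C_le (hcoeff : ∀ i < k, ‖p.coeff i‖ ≤ ε * R ^ (k + 1 - i))
    (hε : 0 ≤ ε) (hR : 0 < R) {y : K} (hy : p.IsRoot y) (hy₁ : R / 2 ≤ ‖y‖) (hy₂ : ‖y‖ ≤ R)
    {j : ℕ} (hj : j < k) :
    ‖(p /ₘ (X - C y)).coeff j‖ ≤ k * ε * 3 ^ (k + 1) * (R / 3) ^ (k - j) := by
  set g := p /ₘ (X - C y)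
  have hfac : g * (X - C y) = p := by rw [mul_comm]; exact mul_divByMonic_eq_iff_isRoot.mpr hy
  have hgy : ‖g.coeff j‖ * ‖y‖ ^ (j + 1) ≤ (j + 1 : ℕ) * (ε * R ^ (k + 1)) := by
    have h := sum_range_coeff_mul_X_sub_C_mul_pow g y j
    rw [hfac] at h
    rw [← norm_pow, ← norm_mul, ← norm_neg, ← h]
    exact norm_sum_range_coeff_mul_pow_le hcoeff hy₂ hj
  have hsplit : (R / 3) ^ (k - j) * 3 ^ (k + 1) * (R / 2) ^ (j + 1)
      = (3 / 2) ^ (j + 1) * R ^ (k + 1) := by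
    rw [show k + 1 = (k - j) + (j + 1) by omega]
    rw [div_pow, div_pow, div_pow]
    field_simp
    ring
  have hjk : ((j + 1 : ℕ) : ℝ) ≤ k := by exact_mod_cast hj
  refine le_of_mul_le_mul_right ?_ (by positivity : (0 : ℝ) < (R / 2) ^ (j + 1))
  calc ‖g.coeff j‖ * (R / 2) ^ (j + 1) ≤ ‖g.coeff j‖ * ‖y‖ ^ (j + 1) := by gcongr
    _ ≤ (j + 1 : ℕ) * (ε * R ^ (k + 1)) := hgy
    _ ≤ k * (ε * R ^ (k + 1)) := by gcongr
    _ ≤ k * (ε * R ^ (k + 1)) * (3 / 2) ^ (j + 1) :=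
        le_mul_of_one_le_right (by positivity) (one_le_pow₀ (by norm_num))
    _ = k * ε * 3 ^ (k + 1) * (R / 3) ^ (k - j) * (R / 2) ^ (j + 1) := by
        linear_combination (-(k * ε)) * hsplit

theorem norm_lt_of_isRoot_of_ne (hp : p.Monic)
    (hdeg : p.natDegree = k + 1) (hcoeff : ∀ i < k, ‖p.coeff i‖ ≤ ε * R ^ (k + 1 - i))
    (hε₀ : 0 ≤ ε) (hε : (k + 1) ^ 2 * 10 ^ (k + 1) * ε ≤ 1) (hR : 0 < R) {y μ : K}
    (hy : p.IsRoot y) (hy₁ : R / 2 ≤ ‖y‖) (hy₂ : ‖y‖ ≤ R) (hμ : p.IsRoot μ) (hμy : μ ≠ y) :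
    ‖μ‖ < R / 3 := by
  set g := p /ₘ (X - C y)
  have hfac : (X - C y) * g = p := mul_divByMonic_eq_iff_isRoot.mpr hy
  have hg : g.Monic := (monic_X_sub_C y).of_mul_monic_left (hfac ▸ hp)
  have hgdeg : g.natDegree = k := by
    rw [natDegree_divByMonic _ (monic_X_sub_C y), hdeg, natDegree_X_sub_C, Nat.add_sub_cancel]
  have hgμ : g.IsRoot μ := by
    have h := hμ.eq_zero
    rw [← hfac, eval_mul, eval_sub, eval_X, eval_C] at h
    exact (mul_eq_zero.mp h).resolve_left (sub_ne_zero.mpr hμy)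
  have hkε : (k : ℝ) * (k * ε * 3 ^ (k + 1)) < 1 := by
    have h3 : (3 : ℝ) ^ (k + 1) ≤ 10 ^ (k + 1) := pow_le_pow_left₀ (by norm_num) (by norm_num) _
    have hk : (k : ℝ) ^ 2 * 3 ^ (k + 1) < (k + 1) ^ 2 * 10 ^ (k + 1) := by
      have : (k : ℝ) ^ 2 < (k + 1) ^ 2 := by gcongr; linarith
      exact mul_lt_mul_of_lt_of_le_of_nonneg_of_pos this h3 (by positivity) (by positivity)
    rcases hε₀.eq_or_lt with rfl | hε_pos
    · simp
    · nlinarith [mul_lt_mul_of_pos_right hk hε_pos]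
  refine norm_lt_of_isRoot_of_norm_coeff_le (δ := k * ε * 3 ^ (k + 1)) hg (by positivity)
    (by positivity) ?_ ?_ hgμ
  · rw [hgdeg]
    exact fun j hj => norm_coeff_divByMonic_X_sub_C_le hcoeff hε₀ hR hy hy₁ hy₂ hj
  · rwa [hgdeg]

end SmallLowerCoefficients

theorem exists_isRoot_mem_Icc {k : ℕ} {R ε : ℝ} {p : ℝ[X]} (hp : p.Monic)
    (hdeg : p.natDegree = k + 1) (hcoeff : ∀ i < k, ‖p.coeff i‖ ≤ ε * R ^ (k + 1 - i))
    (hε₀ : 0 ≤ ε) (hε : (k + 1) ^ 2 * 10 ^ (k + 1) * ε ≤ 1)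
    (hs₁ : 7 * R / 10 ≤ -p.coeff k) (hs₂ : -p.coeff k ≤ 4 * R / 5) :
    ∃ y ∈ Set.Icc (3 * R / 5) (9 * R / 10), p.IsRoot y := by
  set s := -p.coeff k
  have hR : 0 ≤ R := by linarith
  have heval : ∀ x, p.eval x = x ^ k * (x - s) + ∑ i ∈ range k, p.coeff i * x ^ i := by
    intro x
    rw [eval_eq_sum_range, hdeg, sum_range_succ, sum_range_succ, ← hdeg, hp.coeff_natDegree, hdeg]
    ring
  have hkε : k * (ε * R ^ (k + 1)) ≤ (3 * R / 5) ^ k * (R / 10) := by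
    have hk : (k : ℝ) * 10 ^ (k + 1) * ε ≤ 1 := by
      have : (k : ℝ) ≤ (k + 1) ^ 2 := by nlinarith
      nlinarith [mul_le_mul_of_nonneg_right this (by positivity : (0 : ℝ) ≤ 10 ^ (k + 1) * ε)]
    have h6 : (3 * R / 5) ^ k * (R / 10) * 10 ^ (k + 1) = 6 ^ k * R ^ (k + 1) := by
      rw [show (6 : ℝ) = 3 / 5 * 10 by norm_num, mul_pow]
      ring
    refine le_of_mul_le_mul_right ?_ (by positivity : (0 : ℝ) < 10 ^ (k + 1))
    rw [h6]
    calc k * (ε * R ^ (k + 1)) * 10 ^ (k + 1) = (k * 10 ^ (k + 1) * ε) * R ^ (k + 1) := by ring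
      _ ≤ 1 * R ^ (k + 1) := by gcongr
      _ ≤ 6 ^ k * R ^ (k + 1) := by gcongr; exact one_le_pow₀ (by norm_num)
  have hlower : ∀ x, 3 * R / 5 ≤ x → x ≤ R →
      |∑ i ∈ range k, p.coeff i * x ^ i| ≤ x ^ k * (R / 10) := by
    intro x hx₁ hx₂
    have h := norm_sum_range_coeff_mul_pow_le hcoeff (x := x)
      (by rw [Real.norm_eq_abs, abs_of_nonneg (by linarith)]; exact hx₂) le_rfl
    rw [Real.norm_eq_abs] at h
    calc _ ≤ _ := h
      _ ≤ (3 * R / 5) ^ k * (R / 10) := hkε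
      _ ≤ x ^ k * (R / 10) := by gcongr
  have hneg : p.eval (s - R / 10) ≤ 0 := by
    have h := abs_le.mp (hlower (s - R / 10) (by linarith) (by linarith))
    rw [heval]
    nlinarith [h.2]
  have hpos : 0 ≤ p.eval (s + R / 10) := by
    have h := abs_le.mp (hlower (s + R / 10) (by linarith) (by linarith))
    rw [heval]
    nlinarith [h.1]
  obtain ⟨y, hy, hy0⟩ := intermediate_value_Icc (by linarith : s - R / 10 ≤ s + R / 10)
    p.continuous.continuousOn ⟨hneg, hpos⟩
  exact ⟨y, ⟨by linarith [hy.1], by linarith [hy.2]⟩, hy0⟩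

noncomputable def monicOfCoeffs (k : ℕ) (c : Fin (k + 1) → ℤ) : ℤ[X] :=
  X ^ (k + 1) + ∑ i, C (c i) * X ^ (i : ℕ)

section MonicOfCoeffs

variable {k : ℕ}

theorem monicOfCoeffs_monic (c : Fin (k + 1) → ℤ) : (monicOfCoeffs k c).Monic :=
  monic_X_pow_add (degree_sum_fin_lt c)

theorem natDegree_monicOfCoeffs (c : Fin (k + 1) → ℤ) : (monicOfCoeffs k c).natDegree = k + 1 :=
  natDegree_add_eq_left_of_degree_lt ((degree_sum_fin_lt c).trans_eq (degree_X_pow _).symm)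
    |>.trans (natDegree_X_pow _)

theorem coeff_monicOfCoeffs (c : Fin (k + 1) → ℤ) {i : ℕ} (hi : i < k + 1) :
    (monicOfCoeffs k c).coeff i = c ⟨i, hi⟩ := by
  simp only [monicOfCoeffs, coeff_add, coeff_X_pow, hi.ne, if_false, zero_add, finsetSum_coeff,
    coeff_C_mul_X_pow]
  rw [sum_eq_single ⟨i, hi⟩ (fun j _ hj => if_neg fun h => hj (Fin.ext h.symm)) (by simp),
    if_pos rfl]

theorem monicOfCoeffs_injective : Function.Injective (monicOfCoeffs k) := fun c d h =>
  funext fun i => by rw [← coeff_monicOfCoeffs c i.is_lt, h, coeff_monicOfCoeffs]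

end MonicOfCoeffs

theorem Int.sub_add_one_le_card_Icc (a b : ℤ) : ((b - a + 1 : ℤ) : ℝ) ≤ #(Icc a b) := by
  rw [Int.card_Icc, add_sub_right_comm]
  exact_mod_cast Int.self_le_toNat _

noncomputable def coeffChoices (k : ℕ) (ε R : ℝ) (i : Fin (k + 1)) : Finset ℤ :=
  if i = Fin.last k then (Icc ⌈7 * R / 20⌉ ⌊2 * R / 5⌋).image fun m => -(2 * m)
  else (Icc 0 ⌊ε * R ^ (k + 1 - (i : ℕ)) / 8⌋).image fun m => 4 * m + 2

noncomputable def coeffBox (k : ℕ) (ε R : ℝ) : Finset (Fin (k + 1) → ℤ) :=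
  Fintype.piFinset (coeffChoices k ε R)

section CoeffBox

variable {k : ℕ} {ε R : ℝ} {c : Fin (k + 1) → ℤ}

theorem coeff_last_of_mem_coeffBox (hc : c ∈ coeffBox k ε R) :
    2 ∣ c (Fin.last k) ∧ 7 * R / 10 ≤ -(c (Fin.last k) : ℝ) ∧
      -(c (Fin.last k) : ℝ) ≤ 4 * R / 5 := by
  have h := Fintype.mem_piFinset.mp hc (Fin.last k)
  rw [coeffChoices, if_pos rfl, mem_image] at h
  obtain ⟨m, hm, hcm⟩ := h
  rw [mem_Icc, Int.ceil_le, Int.le_floor] at hm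
  rw [← hcm]
  push_cast
  exact ⟨⟨-m, by ring⟩, by linarith, by linarith⟩

theorem coeff_of_mem_coeffBox_of_ne_last (hc : c ∈ coeffBox k ε R) (hR : 1 ≤ R)
    (hεR : 4 ≤ ε * R) {i : Fin (k + 1)} (hi : i ≠ Fin.last k) :
    2 ∣ c i ∧ ¬ 4 ∣ c i ∧ |(c i : ℝ)| ≤ ε * R ^ (k + 1 - (i : ℕ)) := by
  have h := Fintype.mem_piFinset.mp hc i
  rw [coeffChoices, if_neg hi, mem_image] at h
  obtain ⟨m, hm, hcm⟩ := h
  rw [mem_Icc, Int.le_floor] at hm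
  rw [← hcm]
  have hRi : R ≤ R ^ (k + 1 - (i : ℕ)) := le_self_pow₀ hR (by omega)
  have hm₀ : (0 : ℝ) ≤ m := by exact_mod_cast hm.1
  refine ⟨⟨2 * m + 1, by ring⟩, by omega, ?_⟩
  push_cast
  rw [abs_of_nonneg (by positivity)]
  nlinarith [hm.2]

theorem card_coeffChoices_ge (hε : ε ≤ 1 / 5) (hR : 40 ≤ R) (i : Fin (k + 1)) :
    ε / 8 * R ^ (k + 1 - (i : ℕ)) ≤ (#(coeffChoices k ε R i) : ℝ) := by
  rw [coeffChoices]
  split_ifs with hi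
  · rw [card_image_of_injective _ fun a b h => by simpa using h]
    refine le_trans ?_ (Int.sub_add_one_le_card_Icc _ _)
    have h₁ := Int.sub_one_lt_floor (2 * R / 5)
    have h₂ := Int.ceil_lt_add_one (7 * R / 20)
    rw [hi, Fin.val_last, Nat.add_sub_cancel_left, pow_one]
    push_cast
    nlinarith [mul_le_mul_of_nonneg_right hε (by linarith : (0 : ℝ) ≤ R)]
  · rw [card_image_of_injective _ fun a b h => by simpa using h]
    refine le_trans ?_ (Int.sub_add_one_le_card_Icc _ _)
    have := Int.lt_floor_add_one (ε * R ^ (k + 1 - (i : ℕ)) / 8)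
    push_cast
    linarith

theorem card_coeffBox_ge (hε₀ : 0 ≤ ε) (hε : ε ≤ 1 / 5) (hR : 40 ≤ R) :
    (ε / 8) ^ (k + 1) * R ^ ((k + 1) * (k + 1 + 1) / 2) ≤ (#(coeffBox k ε R) : ℝ) :=
  calc (ε / 8) ^ (k + 1) * R ^ ((k + 1) * (k + 1 + 1) / 2)
      = ∏ i : Fin (k + 1), ε / 8 * R ^ (k + 1 - (i : ℕ)) := by
        rw [prod_mul_distrib, prod_const, card_univ, Fintype.card_fin, prod_pow_eq_pow_sum,
          Fin.sum_univ_sub_val_eq]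
    _ ≤ ∏ i, (#(coeffChoices k ε R i) : ℝ) :=
        prod_le_prod (fun i _ => by positivity) fun i _ => card_coeffChoices_ge hε hR i
    _ = #(coeffBox k ε R) := by rw [coeffBox, Fintype.card_piFinset, Nat.cast_prod]

end CoeffBox

def perronSet (n : ℕ) (R : ℝ) : Set ℝ :=
  {y : ℝ | IsPerronNumber y ∧ (minpoly ℚ y).natDegree = n ∧ R / 2 ≤ y ∧ y ≤ R ∧
    ∀ μ ∈ (minpoly ℚ y).aroots ℂ, μ ≠ (y : ℂ) → ‖μ‖ < R / 3}

theorem finite_setOf_isIntegral_aroots_norm_le (n : ℕ) (B : ℝ) :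
    {x : ℝ | IsIntegral ℤ x ∧ (minpoly ℚ x).natDegree ≤ n ∧
      ∀ μ ∈ (minpoly ℚ x).aroots ℂ, ‖μ‖ ≤ B}.Finite := by
  classical
  set C : ℤ := ⌈max B 1 ^ n * n.choose (n / 2)⌉
  refine (bUnion_roots_finite (Int.castRingHom ℝ) n (Set.finite_Icc (-C) C)).subset ?_
  rintro x ⟨hx, hdeg, hroots⟩
  have hmin : minpoly ℚ x = (minpoly ℤ x).map (algebraMap ℤ ℚ) :=
    minpoly.isIntegrallyClosed_eq_field_fractions' ℚ hx
  have hmonic := minpoly.monic hx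
  have hdegℤ : (minpoly ℤ x).natDegree ≤ n := by rwa [hmin, hmonic.natDegree_map] at hdeg
  have hmapℂ : (minpoly ℤ x).map (Int.castRingHom ℂ) = (minpoly ℚ x).map (algebraMap ℚ ℂ) := by
    rw [hmin, Polynomial.map_map, ← IsScalarTower.algebraMap_eq ℤ ℚ ℂ, algebraMap_int_eq]
  simp_rw [Set.mem_iUnion]
  refine ⟨minpoly ℤ x, ⟨hdegℤ, fun i => ?_⟩, ?_⟩
  · have h := coeff_bdd_of_roots_le (Int.castRingHom ℂ) hmonic (IsAlgClosed.splits _) hdegℤ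
      (by rw [hmapℂ]; exact hroots) i
    rw [coeff_map, eq_intCast, Complex.norm_intCast] at h
    rw [Set.mem_Icc, ← abs_le]
    exact_mod_cast h.trans (Int.le_ceil _)
  · rw [Finset.mem_coe, Multiset.mem_toFinset, mem_roots (hmonic.map _).ne_zero, IsRoot.def,
      eval_map, ← algebraMap_int_eq, ← aeval_def, minpoly.aeval]

theorem perronSet_finite (n : ℕ) (R : ℝ) : (perronSet n R).Finite := by
  refine (finite_setOf_isIntegral_aroots_norm_le n R).subset ?_
  rintro y ⟨⟨-, hy, -⟩, hdeg, hy₁, hy₂, hsmall⟩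
  refine ⟨hy, hdeg.le, fun μ hμ => ?_⟩
  by_cases hμy : μ = y
  · rw [hμy, Complex.norm_real, Real.norm_eq_abs, abs_of_nonneg (by linarith)]
    exact hy₂
  · linarith [hsmall μ hμ hμy]

section Construction

variable {k : ℕ} {ε R : ℝ} {c : Fin (k + 1) → ℤ}

theorem norm_coeff_map_monicOfCoeffs_le {K : Type*} [RCLike K] (hc : c ∈ coeffBox k ε R)
    (hR : 1 ≤ R) (hεR : 4 ≤ ε * R) :
    ∀ i < k, ‖((monicOfCoeffs k c).map (algebraMap ℤ K)).coeff i‖ ≤ ε * R ^ (k + 1 - i) := by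
  intro i hi
  have hil : (⟨i, by omega⟩ : Fin (k + 1)) ≠ Fin.last k := by simp [Fin.ext_iff]; omega
  rw [coeff_map, coeff_monicOfCoeffs c (by omega), algebraMap_int_eq, eq_intCast,
    ← RCLike.ofReal_intCast, RCLike.norm_ofReal]
  exact (coeff_of_mem_coeffBox_of_ne_last hc hR hεR hil).2.2

theorem irreducible_monicOfCoeffs (hk : 1 ≤ k) (hc : c ∈ coeffBox k ε R) (hR : 1 ≤ R)
    (hεR : 4 ≤ ε * R) : Irreducible (monicOfCoeffs k c) := by
  have hdeg := natDegree_monicOfCoeffs c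
  refine (monicOfCoeffs_monic c).irreducible_of_prime_dvd_coeff (by omega) Int.prime_two
    (fun i hi => ?_) ?_
  · rw [hdeg] at hi
    rw [coeff_monicOfCoeffs c hi]
    by_cases hil : (⟨i, hi⟩ : Fin (k + 1)) = Fin.last k
    · rw [hil]; exact (coeff_last_of_mem_coeffBox hc).1
    · exact (coeff_of_mem_coeffBox_of_ne_last hc hR hεR hil).1
  · have h0 : (⟨0, by omega⟩ : Fin (k + 1)) ≠ Fin.last k := by simp [Fin.ext_iff]; omega
    rw [coeff_monicOfCoeffs c (by omega)]
    exact (coeff_of_mem_coeffBox_of_ne_last hc hR hεR h0).2.1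

theorem exists_mem_perronSet_of_mem_coeffBox (hk : 1 ≤ k) (hε₀ : 0 ≤ ε)
    (hε : (k + 1) ^ 2 * 10 ^ (k + 1) * ε ≤ 1) (hR : 2 ≤ R) (hεR : 4 ≤ ε * R)
    (hc : c ∈ coeffBox k ε R) :
    ∃ y ∈ perronSet (k + 1) R, minpoly ℚ y = (monicOfCoeffs k c).map (algebraMap ℤ ℚ) := by
  set p := monicOfCoeffs k c
  have hp : p.Monic := monicOfCoeffs_monic c
  have hdeg : p.natDegree = k + 1 := natDegree_monicOfCoeffs c
  have hlast : (p.map (algebraMap ℤ ℝ)).coeff k = c (Fin.last k) := by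
    rw [coeff_map, coeff_monicOfCoeffs c k.lt_succ_self]
    rfl
  obtain ⟨-, hs₁, hs₂⟩ := coeff_last_of_mem_coeffBox hc
  obtain ⟨y, ⟨hy₁, hy₂⟩, hy⟩ := exists_isRoot_mem_Icc (hp.map _)
    (by rw [hp.natDegree_map, hdeg]) (norm_coeff_map_monicOfCoeffs_le hc (by linarith) hεR)
    hε₀ hε (by rw [hlast]; exact hs₁) (by rw [hlast]; exact hs₂)
  rw [IsRoot, eval_map_algebraMap] at hy
  have hmin := minpoly_eq_map_of_irreducible hp
    (irreducible_monicOfCoeffs hk hc (by linarith) hεR) hy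
  have hsmall : ∀ μ ∈ (minpoly ℚ y).aroots ℂ, μ ≠ (y : ℂ) → ‖μ‖ < R / 3 := by
    intro μ hμ hμy
    rw [hmin, mem_aroots', aeval_map_algebraMap] at hμ
    have hyℂ : ‖(y : ℂ)‖ = y := by
      rw [Complex.norm_real, Real.norm_eq_abs, abs_of_nonneg (by linarith)]
    refine norm_lt_of_isRoot_of_ne (hp.map _) (by rw [hp.natDegree_map, hdeg])
      (norm_coeff_map_monicOfCoeffs_le hc (by linarith) hεR) hε₀ hε (by linarith) ?_
      (by rw [hyℂ]; linarith) (by rw [hyℂ]; linarith) ?_ hμy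
    · rw [IsRoot, eval_map_algebraMap, ← Complex.coe_algebraMap, aeval_algebraMap_apply, hy,
        map_zero]
    · rw [IsRoot, eval_map_algebraMap]
      exact hμ.2
  refine ⟨y, ⟨⟨by linarith, ⟨p, hp, by rwa [← aeval_def]⟩, fun μ hμ hμy => ?_⟩,
    by rw [hmin, hp.natDegree_map, hdeg], by linarith, by linarith, hsmall⟩, hmin⟩
  linarith [hsmall μ hμ hμy]

theorem card_coeffBox_le_ncard_perronSet (hk : 1 ≤ k) (hε₀ : 0 ≤ ε)
    (hε : (k + 1) ^ 2 * 10 ^ (k + 1) * ε ≤ 1) (hR : 2 ≤ R) (hεR : 4 ≤ ε * R) :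
    #(coeffBox k ε R) ≤ (perronSet (k + 1) R).ncard := by
  classical
  have hinj : Function.Injective fun c => (monicOfCoeffs k c).map (algebraMap ℤ ℚ) :=
    (map_injective _ (algebraMap ℤ ℚ).injective_int).comp monicOfCoeffs_injective
  calc #(coeffBox k ε R)
      = (((coeffBox k ε R).image fun c => (monicOfCoeffs k c).map (algebraMap ℤ ℚ) :
          Finset ℚ[X]) : Set ℚ[X]).ncard := by
        rw [Set.ncard_coe_finset, card_image_of_injective _ hinj]
    _ ≤ (minpoly ℚ '' perronSet (k + 1) R).ncard := by
        refine Set.ncard_le_ncard ?_ ((perronSet_finite _ _).image _)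
        rw [coe_image]
        rintro _ ⟨c, hc, rfl⟩
        obtain ⟨y, hy, hmin⟩ := exists_mem_perronSet_of_mem_coeffBox hk hε₀ hε hR hεR hc
        exact ⟨y, hy, hmin⟩
    _ ≤ (perronSet (k + 1) R).ncard := Set.ncard_image_le (perronSet_finite _ _)

end Construction

/-- The number of Perron numbers `y` of degree `n` with `R/2 ≤ y ≤ R`
whose Galois conjugates `μ ≠ y` all satisfy `|μ| < R/3` is at least `c · R^(n(n+1)/2)` for
all sufficiently large `R` (and `R ≥ 13`). -/
theorem perron_numbers_with_small_conjugates_card_ge (n : ℕ) (hn : 2 ≤ n) :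
    ∃ c : ℝ, 0 < c ∧ ∀ᶠ R : ℝ in Filter.atTop, 13 ≤ R ∧
      c * R ^ (n * (n + 1) / 2) ≤
        (({y : ℝ | IsPerronNumber y ∧ (minpoly ℚ y).natDegree = n ∧
            R / 2 ≤ y ∧ y ≤ R ∧
            ∀ μ ∈ (minpoly ℚ y).aroots ℂ, μ ≠ (y : ℂ) →
              ‖μ‖ < R / 3}).ncard : ℝ) := by
  obtain ⟨k, rfl⟩ : ∃ k, n = k + 1 := ⟨n - 1, by omega⟩
  set ε : ℝ := 1 / ((k + 1) ^ 2 * 10 ^ (k + 1))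
  have hε₀ : 0 < ε := by positivity
  have hε : (k + 1) ^ 2 * 10 ^ (k + 1) * ε = 1 := by
    simp only [ε]
    field_simp
  have hε₅ : ε ≤ 1 / 5 := by
    have h₁ : (1 : ℝ) ≤ (k + 1) ^ 2 := one_le_pow₀ (by linarith [k.cast_nonneg (α := ℝ)])
    have h₂ : (10 : ℝ) ≤ 10 ^ (k + 1) := le_self_pow₀ (by norm_num) (by omega)
    have : (10 : ℝ) ≤ (k + 1) ^ 2 * 10 ^ (k + 1) := by nlinarith
    nlinarith
  refine ⟨(ε / 8) ^ (k + 1), by positivity, ?_⟩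
  filter_upwards [Filter.eventually_ge_atTop (40 / ε)] with R hR
  have hεR : 40 ≤ ε * R := by rwa [div_le_iff₀' hε₀] at hR
  have h40 : 40 ≤ R := by nlinarith
  refine ⟨by linarith, (card_coeffBox_ge hε₀.le hε₅ h40).trans ?_⟩
  exact_mod_cast card_coeffBox_le_ncard_perronSet (by omega) hε₀.le hε.le (by linarith)
    (by linarith)
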